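/- Let A and B be n × n real symmetric positive semidefinite matrices. Then A ∘ B ≥ (A^{1/2} ∘ B^{1/2})² in the Loewner order. -/

import Mathlib

/-!
Write `A = C²` and `B = D²` with `C = A^{1/2}`, `D = B^{1/2}` symmetric. Then `A ∘ B` is the Gram
matrix of the vectors `u i = (C i k * D i l)_{k,l}`, and `(C ∘ D)²` is the Gram matrix of their
diagonal parts `(C i k * D i k)_k`. The difference is the Gram matrix of the off-diagonal parts,
hence positive semidefinite.
-/

open Matrix

/-- The positive semidefinite square root, as defined in the older Mathlib (removed since). -/
noncomputable def Matrix.PosSemidef.sqrt {n : Type*} [Fintype n] [DecidableEq n]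
    {A : Matrix n n ℝ} (hA : A.PosSemidef) : Matrix n n ℝ :=
  (hA.1.eigenvectorUnitary : Matrix n n ℝ) * diagonal (fun i => √(hA.1.eigenvalues i)) *
    (star hA.1.eigenvectorUnitary : Matrix n n ℝ)

namespace Matrix

variable {ι κ R : Type*} [Fintype κ] [DecidableEq κ] [CommRing R] [StarRing R]

def offDiagFaceSplitting (C D : Matrix ι κ R) : Matrix ι (κ × κ) R :=
  fun i p => if p.1 = p.2 then 0 else C i p.1 * D i p.2

theorem hadamard_mul_conjTranspose_sub_eq (C D : Matrix ι κ R) :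
    (C * Cᴴ) ⊙ (D * Dᴴ) - (C ⊙ D) * (C ⊙ D)ᴴ =
      offDiagFaceSplitting C D * (offDiagFaceSplitting C D)ᴴ := by
  ext i j
  set g : κ → κ → R := fun k l => C i k * D i l * (star (C j k) * star (D j l))
  have hsplit : ∀ k l, (if k = l then 0 else C i k * D i l) *
      star (if k = l then 0 else C j k * D j l) = g k l - if k = l then g k l else 0 := by
    intro k l
    split_ifs <;> simp [g, star_mul']
  have hdiag : ∀ k, ∑ l, (if k = l then g k l else 0) = g k k := fun k => by simp
  simp only [sub_apply, hadamard_apply, mul_apply, conjTranspose_apply, offDiagFaceSplitting,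
    Fintype.sum_prod_type, Finset.sum_mul_sum, hsplit, Finset.sum_sub_distrib, hdiag]
  refine congrArg₂ (· - ·) ?_ ?_
  · exact Finset.sum_congr rfl fun k _ => Finset.sum_congr rfl fun l _ => by ring
  · exact Finset.sum_congr rfl fun k _ => by simp only [g, star_mul']

theorem posSemidef_hadamard_mul_conjTranspose_sub [Finite ι] [PartialOrder R] [StarOrderedRing R]
    (C D : Matrix ι κ R) : ((C * Cᴴ) ⊙ (D * Dᴴ) - (C ⊙ D) * (C ⊙ D)ᴴ).PosSemidef := by
  rw [hadamard_mul_conjTranspose_sub_eq]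
  exact posSemidef_self_mul_conjTranspose _

end Matrix

namespace Matrix.PosSemidef

variable {n : Type*} [Fintype n] [DecidableEq n] {A : Matrix n n ℝ} (hA : A.PosSemidef)

theorem sqrt_eq_conjStarAlgAut : hA.sqrt = Unitary.conjStarAlgAut ℝ _ hA.1.eigenvectorUnitary
    (diagonal fun i => √(hA.1.eigenvalues i)) :=
  rfl

theorem isHermitian_sqrt : hA.sqrt.IsHermitian := by
  rw [sqrt_eq_conjStarAlgAut, IsHermitian, ← star_eq_conjTranspose, ← map_star,
    star_eq_conjTranspose, diagonal_conjTranspose, star_trivial]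

theorem sqrt_mul_self : hA.sqrt * hA.sqrt = A := by
  rw [sqrt_eq_conjStarAlgAut, ← map_mul, diagonal_mul_diagonal]
  conv_rhs => rw [hA.1.spectral_theorem]
  congr 2
  funext i
  simp [Real.mul_self_sqrt (hA.eigenvalues_nonneg i)]

end Matrix.PosSemidef

/-- Mond–Pečarić inequality, case r = 1, s = 2: `A ∘ B ≥ (A^{1/2} ∘ B^{1/2})²`. -/
theorem hadamard_ge_sq_of_hadamard_sqrt {n : ℕ} (A B : Matrix (Fin n) (Fin n) ℝ)
    (hA : A.PosSemidef) (hB : B.PosSemidef) :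
    (Matrix.hadamard A B -
      Matrix.hadamard hA.sqrt hB.sqrt * Matrix.hadamard hA.sqrt hB.sqrt).PosSemidef := by
  have hC := hA.isHermitian_sqrt
  have hD := hB.isHermitian_sqrt
  have key := posSemidef_hadamard_mul_conjTranspose_sub hA.sqrt hB.sqrt
  rwa [(hC.hadamard hD).eq, hC.eq, hD.eq, hA.sqrt_mul_self, hB.sqrt_mul_self] at key
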